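/- arXiv:2405.03353 — 9 statements merged into one kernel-verified Lean document; each statement's English description precedes it below -/
import Mathlib

section
/- Let M be an m×m real upper triangular matrix with diagonal entries in [0,1), such that every row of M except the last sums to 1, and M(m-1, j) = 0 for all j. Let A = I − M. Then A^{-1}(i, m−1) = 1 for all i, i.e., the last column of A^{-1} consists entirely of ones. -/
/-!
Since every row of `M` but the last sums to `1` and the last row vanishes, `(1 - M) *ᵥ 1` is the
last standard basis vector; applying `(1 - M)⁻¹` shows that the last column of the inverse is
the all-ones vector. Invertibility comes from `1 - M` being upper triangular with nonzero
diagonal entries `1 - M i i`.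
-/

namespace Matrix

variable {n K : Type*} [Fintype n] [DecidableEq n]

theorem inv_col_eq_of_mulVec_eq_single [CommRing K] {A : Matrix n n K} (hA : IsUnit A.det)
    {u : n → K} {k : n} (hu : A *ᵥ u = Pi.single k 1) : A⁻¹.col k = u := by
  rw [← mulVec_single_one, ← hu, mulVec_mulVec, nonsing_inv_mul A hA, one_mulVec]

theorem isUnit_det_one_sub_of_isUpperTriangular [LinearOrder n] [Field K] {M : Matrix n n K}
    (hM : M.IsUpperTriangular) (hdiag : ∀ i, M i i ≠ 1) : IsUnit (1 - M).det := by
  rw [isUnit_iff_ne_zero, det_of_isUpperTriangular (blockTriangular_one.sub hM),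
    Finset.prod_ne_zero_iff]
  intro i _
  simpa [sub_eq_zero] using (hdiag i).symm

theorem one_sub_mulVec_one_eq_single [CommRing K] {M : Matrix n n K} {k : n}
    (hrow : ∀ i ≠ k, ∑ j, M i j = 1) (hk : ∀ j, M k j = 0) :
    (1 - M) *ᵥ 1 = Pi.single k 1 := by
  ext i
  rw [sub_mulVec, one_mulVec, Pi.sub_apply, Pi.one_apply, mulVec, dotProduct]
  simp only [Pi.one_apply, mul_one]
  rcases eq_or_ne i k with rfl | hi
  · simp [hk]
  · simp [hrow i hi, hi]

end Matrix

open Matrix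

theorem last_column_of_inverse (m : ℕ) (hm : 0 < m)
    (M : Matrix (Fin m) (Fin m) ℝ)
    (hut : ∀ i j : Fin m, j < i → M i j = 0)
    (hdiag : ∀ i : Fin m, 0 ≤ M i i ∧ M i i < 1)
    (hrow : ∀ i : Fin m, (i : ℕ) ≠ m - 1 → ∑ j, M i j = 1)
    (hlast : ∀ j : Fin m, M ⟨m - 1, by omega⟩ j = 0) :
    ∀ i : Fin m, (1 - M)⁻¹ i ⟨m - 1, by omega⟩ = 1 := by
  intro i
  have hdet : IsUnit (1 - M).det :=
    isUnit_det_one_sub_of_isUpperTriangular (fun _ _ => hut _ _) fun i => (hdiag i).2.ne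
  have hones : (1 - M) *ᵥ 1 = Pi.single ⟨m - 1, by omega⟩ 1 :=
    one_sub_mulVec_one_eq_single (fun i hi => hrow i fun h => hi (Fin.ext h)) hlast
  exact congrFun (inv_col_eq_of_mulVec_eq_single hdet hones) i
end

section
/- Let M be an m×m real upper triangular matrix with diagonal entries in [0,1), such that every row except the last sums to 1, the last row is zero, and for all 0 ≤ i < j ≤ m−1 with i+1 < j the ratio M(i,j)/M(i+1,j) equals a value φ_i depending only on i (with M(i+1,j) ≠ 0). Let A = I − M. Then for all i < j, A^{-1}(i,j) = δ_j where δ_j = −A(j−1,j)/(A(j−1,j−1)·A(j,j)), and A^{-1}(i,i) = 1/A(i,i), and A^{-1}(i,j) = 0 for i > j. -/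
/-- The value `δ_j = −A(j−1,j)/(A(j−1,j−1)·A(j,j))` where `A = I − M`. -/
noncomputable def delta {m : ℕ} (M : Matrix (Fin m) (Fin m) ℝ) (j : Fin m) : ℝ :=
  -(1 - M) ⟨(j : ℕ) - 1, lt_of_le_of_lt (Nat.sub_le _ _) j.isLt⟩ j /
    ((1 - M) ⟨(j : ℕ) - 1, lt_of_le_of_lt (Nat.sub_le _ _) j.isLt⟩
        ⟨(j : ℕ) - 1, lt_of_le_of_lt (Nat.sub_le _ _) j.isLt⟩ *
      (1 - M) j j)

/-!
Let `A = 1 - M`: it is upper triangular with nonzero diagonal, its non-last rows sum to `0`, and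
chaining the ratio condition shows that for `i < k` row `i` of `A` agrees, from column `k` on, with
`c • (row k-1)` for some scalar `c`. The candidate inverse `B` (constant `δ_k` above the diagonal of
column `k`, `1 / A k k` on it) then satisfies `(A * B) i k = 0` for `i < k`: the part of row `i`
left of column `k` sums to `c · A (k-1) (k-1)`, because row `k-1` sums to zero, and this cancels
against `A i k / A k k = c · A (k-1) k / A k k` by the choice of `δ_k`.
-/

theorem Finset.sum_Iio_add_sum_Ici {ι R : Type*} [LinearOrder ι] [Fintype ι]
    [LocallyFiniteOrderBot ι] [LocallyFiniteOrderTop ι] [AddCommMonoid R] (f : ι → R) (k : ι) :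
    ∑ j ∈ Iio k, f j + ∑ j ∈ Ici k, f j = ∑ j, f j := by
  rw [← sum_filter_add_sum_filter_not univ (· < k)]
  simp only [not_lt, filter_gt_eq_Iio, filter_le_eq_Ici]

namespace Matrix

section Triangular

variable {ι R : Type*} [LinearOrder ι] [Fintype ι]

theorem IsUpperTriangular.sum_Ici_row [AddCommMonoid R] [LocallyFiniteOrderTop ι]
    {A : Matrix ι ι R} (hA : A.IsUpperTriangular) (i : ι) :
    ∑ j ∈ Finset.Ici i, A i j = ∑ j, A i j :=
  Finset.sum_subset (Finset.subset_univ _) fun _ _ hj => hA (by simpa using hj)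

theorem IsUpperTriangular.mul_apply_self [NonUnitalNonAssocSemiring R] {A B : Matrix ι ι R}
    (hA : A.IsUpperTriangular) (hB : B.IsUpperTriangular) (i : ι) :
    (A * B) i i = A i i * B i i := by
  rw [mul_apply]
  refine Finset.sum_eq_single i (fun j _ hji => ?_) (by simp)
  rcases hji.lt_or_gt with hji | hij
  · rw [hA hji, zero_mul]
  · rw [hB hij, mul_zero]

end Triangular

theorem exists_tail_proportional {R : Type*} [Monoid R] {m : ℕ} {A : Matrix (Fin m) (Fin m) R}
    (φ : Fin m → R)
    (hφ : ∀ i j : Fin m, ∀ h : (i : ℕ) + 1 < j, A i j = φ i * A ⟨i + 1, h.trans j.isLt⟩ j)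
    {i k : Fin m} (hik : i ≤ k) : ∃ c : R, ∀ j, k < j → A i j = c * A k j := by
  obtain ⟨d, hd⟩ := Nat.exists_eq_add_of_le (Fin.le_def.mp hik)
  induction d generalizing i with
  | zero => exact ⟨1, fun j _ => by rw [Fin.ext (by omega : (i : ℕ) = k), one_mul]⟩
  | succ d ih =>
    obtain ⟨c, hc⟩ := ih (i := ⟨i + 1, by omega⟩) (Fin.le_def.mpr (by simp; omega)) (by simp; omega)
    refine ⟨φ i * c, fun j hkj => ?_⟩
    have hij : (i : ℕ) + 1 < j := by rw [Fin.lt_def] at hkj; omega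
    rw [hφ i j hij, hc j hkj, mul_assoc]

section ExplicitInv

variable {K : Type*} [Field K] {m : ℕ}

def truncPred (j : Fin m) : Fin m := ⟨j - 1, by omega⟩

def explicitInv (A : Matrix (Fin m) (Fin m) K) : Matrix (Fin m) (Fin m) K :=
  of fun i j =>
    if i < j then -A (truncPred j) j / (A (truncPred j) (truncPred j) * A j j)
    else if i = j then 1 / A i i else 0

theorem explicitInv_isUpperTriangular (A : Matrix (Fin m) (Fin m) K) :
    (explicitInv A).IsUpperTriangular := fun i j (h : j < i) => by
  simp [explicitInv, not_lt_of_gt h, h.ne']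

variable {A : Matrix (Fin m) (Fin m) K} (hA : A.IsUpperTriangular) (hdiag : ∀ i, A i i ≠ 0)
  (hrow : ∀ i : Fin m, (i : ℕ) + 1 < m → ∑ j, A i j = 0) (φ : Fin m → K)
  (hφ : ∀ i j : Fin m, ∀ h : (i : ℕ) + 1 < j, A i j = φ i * A ⟨i + 1, h.trans j.isLt⟩ j)
include hA hdiag hrow hφ

theorem mul_explicitInv_apply_of_lt {i k : Fin m} (hik : i < k) :
    (A * explicitInv A) i k = 0 := by
  set k' := truncPred k
  have hk'k : k' < k := Fin.lt_def.mpr (by simp [k', truncPred]; omega)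
  have hik' : i ≤ k' := Fin.le_def.mpr (by simp [k', truncPred]; omega)
  have hIci : Finset.Ici k = Finset.Ioi k' := by
    refine Finset.ext fun j => ?_
    simp only [Finset.mem_Ici, Finset.mem_Ioi, Fin.le_def, Fin.lt_def, k', truncPred]
    omega
  obtain ⟨c, hc⟩ := exists_tail_proportional φ hφ hik'
  have hsplit : (A * explicitInv A) i k =
      (∑ j ∈ Finset.Iio k, A i j) * (-A k' k / (A k' k' * A k k)) + A i k * (1 / A k k) := by
    rw [mul_apply, ← Finset.sum_Iio_add_sum_Ici, Finset.sum_mul]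
    congr 1
    · refine Finset.sum_congr rfl fun j hj => ?_
      simp [explicitInv, Finset.mem_Iio.mp hj, k']
    · refine (Finset.sum_eq_single_of_mem k (Finset.mem_Ici.mpr le_rfl) fun j hj hjk => ?_).trans
        (by simp [explicitInv])
      have hkj : k < j := lt_of_le_of_ne (Finset.mem_Ici.mp hj) (Ne.symm hjk)
      simp [explicitInv, not_lt_of_gt hkj, hkj.ne']
  have htail : ∑ j ∈ Finset.Ici k, A k' j = -A k' k' := by
    have := hA.sum_Ici_row k'
    rw [Finset.Ici_eq_cons_Ioi, Finset.sum_cons, ← hIci, hrow k' (by omega)] at this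
    linear_combination this
  have hlower : ∑ j ∈ Finset.Iio k, A i j = c * A k' k' := by
    have := Finset.sum_Iio_add_sum_Ici (A i) k
    rw [hrow i (by omega), Finset.sum_congr rfl fun j hj => hc j (Finset.mem_Ioi.mp (hIci ▸ hj)),
      ← Finset.mul_sum, htail] at this
    linear_combination this
  have := hdiag k'
  rw [hsplit, hlower, hc k hk'k]
  field_simp
  ring

theorem mul_explicitInv : A * explicitInv A = 1 := by
  ext i k
  rcases lt_trichotomy i k with hik | rfl | hki
  · rw [mul_explicitInv_apply_of_lt hA hdiag hrow φ hφ hik, one_apply_ne hik.ne]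
  · rw [hA.mul_apply_self (explicitInv_isUpperTriangular A), one_apply_eq]
    simp [explicitInv, hdiag i]
  · rw [hA.mul (explicitInv_isUpperTriangular A) hki, one_apply_ne hki.ne']

theorem inv_eq_explicitInv : A⁻¹ = explicitInv A :=
  inv_eq_right_inv (mul_explicitInv hA hdiag hrow φ hφ)

end ExplicitInv

end Matrix

theorem inverse_of_A_explicit (m : ℕ)
    (M : Matrix (Fin m) (Fin m) ℝ)
    (hut : ∀ i j : Fin m, j < i → M i j = 0)
    (hdiag : ∀ i : Fin m, 0 ≤ M i i ∧ M i i < 1)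
    (hrow : ∀ i : Fin m, (i : ℕ) ≠ m - 1 → ∑ j, M i j = 1)
    (φ : Fin m → ℝ)
    (hratio : ∀ i j : Fin m, ∀ h : (i : ℕ) + 1 < (j : ℕ),
      M ⟨(i : ℕ) + 1, Nat.lt_trans h j.isLt⟩ j ≠ 0 ∧
        M i j / M ⟨(i : ℕ) + 1, Nat.lt_trans h j.isLt⟩ j = φ i) :
    (∀ i j : Fin m, i < j → (1 - M)⁻¹ i j = delta M j) ∧
      (∀ i : Fin m, (1 - M)⁻¹ i i = 1 / (1 - M) i i) ∧
      (∀ i j : Fin m, j < i → (1 - M)⁻¹ i j = 0) := by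
  have hA : (1 - M).IsUpperTriangular := Matrix.blockTriangular_one.sub fun i j => hut i j
  have hAdiag (i : Fin m) : (1 - M) i i ≠ 0 := by
    simpa [sub_eq_zero] using (hdiag i).2.ne'
  have hArow (i : Fin m) (hi : (i : ℕ) + 1 < m) : ∑ j, (1 - M) i j = 0 := by
    simp [Finset.sum_sub_distrib, Matrix.one_apply, hrow i (by omega)]
  have hAφ (i j : Fin m) (h : (i : ℕ) + 1 < j) :
      (1 - M) i j = φ i * (1 - M) ⟨i + 1, h.trans j.isLt⟩ j := by
    obtain ⟨hne, hquot⟩ := hratio i j h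
    have hij : i ≠ j := Fin.ne_of_lt (Fin.lt_def.mpr (by omega))
    have hij' : (⟨i + 1, h.trans j.isLt⟩ : Fin m) ≠ j := Fin.ne_of_lt (Fin.lt_def.mpr h)
    simp [Matrix.one_apply_ne hij, Matrix.one_apply_ne hij', ← hquot, div_mul_cancel₀ _ hne]
  rw [Matrix.inv_eq_explicitInv hA hAdiag hArow φ hAφ]
  refine ⟨fun i j hij => ?_, fun i => ?_, fun i j hji => ?_⟩
  · simp only [Matrix.explicitInv, Matrix.of_apply, if_pos hij]
    rfl
  · simp [Matrix.explicitInv]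
  · simp [Matrix.explicitInv, not_lt_of_gt hji, hji.ne']
end

section
/- Let t > 0 and n ≥ 1. Define p(i) = (1/2)^{i+1} for 0 ≤ i ≤ n−1 and p(n) = (1/2)^n. Define the (n+1)×(n+1) matrix M with M(i,i) = 1 − t·(1/(1+t))^{i+1} for 0 ≤ i ≤ n−1, M(i,j) = t·(1/(1+t))^{i+1}·(1/2)^{j−i} for 0 ≤ i < j ≤ n−1, M(i,n) = t·(1/(1+t))^{i+1}·(1/2)^{n−i−1} for 0 ≤ i ≤ n−1, M(n,n) = 0, and M(i,j) = 0 for j < i. Then the expression ∑_{i=0}^{n−1} p(i)·(1/A(i,i) + ∑_{j=i+1}^{n−1} δ_j), with A = I − M and δ_j = −A(j−1,j)/(A(j−1,j−1)·A(j,j)), equals ((1+t)/(2t²))·((1+t)^n − 1). -/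
/-- The Markov matrix of BACO on LeadingOnes with `n` bits and pheromone ratio `t`. -/
noncomputable def MLO (n : ℕ) (t : ℝ) : Matrix (Fin (n + 1)) (Fin (n + 1)) ℝ :=
  Matrix.of fun i j =>
    if (j : ℕ) < (i : ℕ) then 0
    else if (i : ℕ) = (j : ℕ) then
      (if (i : ℕ) = n then 0 else 1 - t * (1 / (1 + t)) ^ ((i : ℕ) + 1))
    else if (j : ℕ) = n then t * (1 / (1 + t)) ^ ((i : ℕ) + 1) * (1 / 2) ^ (n - (i : ℕ) - 1)
    else t * (1 / (1 + t)) ^ ((i : ℕ) + 1) * (1 / 2) ^ ((j : ℕ) - (i : ℕ))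

/-- Distribution of the initial Markov state for LeadingOnes. -/
noncomputable def pLO (n : ℕ) (i : Fin (n + 1)) : ℝ :=
  if (i : ℕ) = n then (1 / 2) ^ n else (1 / 2) ^ ((i : ℕ) + 1)

/-
For `i < n` the diagonal entry of `A = I - M` is `t / (1 + t)^(i+1)`, and for `0 < j < n` one finds
`δ_j = (1 + t)^(j+1) / (2t)`. Exchanging the order of summation, level `j < n` contributes
`(1/2)^(j+1) (1+t)^(j+1)/t + (1 - (1/2)^j) (1+t)^(j+1)/(2t) = (1+t)^(j+1)/(2t)`,
and the geometric sum of these is the claimed closed form.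
-/

open Finset

lemma sum_fin_ite_eq_sum_filter_range {M : Type*} [AddCommMonoid M] {m : ℕ} (p : ℕ → Prop)
    [DecidablePred p] (f : Fin m → M) (g : ℕ → M) (hfg : ∀ i : Fin m, p i → f i = g i) :
    ∑ i : Fin m, (if p i then f i else 0) = ∑ i ∈ (range m).filter p, g i := by
  rw [sum_filter, ← Fin.sum_univ_eq_sum_range (fun i => if p i then g i else 0)]
  refine sum_congr rfl fun i _ => ?_
  split_ifs with hi
  exacts [hfg i hi, rfl]

lemma sum_range_mul_add_sum_Ioo {R : Type*} [CommSemiring R] (a b c : ℕ → R) (n : ℕ) :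
    ∑ i ∈ range n, a i * (b i + ∑ j ∈ Ioo i n, c j) =
      ∑ j ∈ range n, (a j * b j + (∑ i ∈ range j, a i) * c j) := by
  have hswap : ∑ i ∈ range n, ∑ j ∈ Ioo i n, a i * c j = ∑ j ∈ range n, ∑ i ∈ range j, a i * c j :=
    sum_comm' fun i j => by simp only [mem_range, mem_Ioo]; omega
  simp only [mul_add, sum_add_distrib, mul_sum, sum_mul, hswap]

lemma sum_range_half_pow_succ (n : ℕ) : ∑ i ∈ range n, ((1 : ℝ) / 2) ^ (i + 1) = 1 - (1 / 2) ^ n := by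
  induction n with
  | zero => simp
  | succ n ih => rw [sum_range_succ, ih]; ring

section MLO

variable {n : ℕ} {t : ℝ}

lemma pLO_of_lt {i : Fin (n + 1)} (hi : (i : ℕ) < n) : pLO n i = (1 / 2) ^ ((i : ℕ) + 1) := by
  simp [pLO, hi.ne]

lemma one_sub_MLO_apply_self {i : Fin (n + 1)} (hi : (i : ℕ) < n) :
    (1 - MLO n t) i i = t * (1 / (1 + t)) ^ ((i : ℕ) + 1) := by
  simp [MLO, hi.ne]

lemma one_sub_MLO_apply_of_lt {i j : Fin (n + 1)} (hij : (i : ℕ) < j) (hj : (j : ℕ) < n) :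
    (1 - MLO n t) i j = -(t * (1 / (1 + t)) ^ ((i : ℕ) + 1) * (1 / 2) ^ ((j : ℕ) - i)) := by
  rw [Matrix.sub_apply, Matrix.one_apply_ne (Fin.ne_of_val_ne hij.ne)]
  simp only [MLO, Matrix.of_apply, if_neg hij.not_gt, if_neg hij.ne, if_neg hj.ne]
  ring

lemma one_div_one_sub_MLO_apply_self (ht : t ≠ 0) (ht' : 1 + t ≠ 0) {i : Fin (n + 1)}
    (hi : (i : ℕ) < n) : 1 / (1 - MLO n t) i i = (1 + t) ^ ((i : ℕ) + 1) / t := by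
  rw [one_sub_MLO_apply_self hi, div_pow, one_pow]
  field_simp

lemma delta_MLO (ht : t ≠ 0) (ht' : 1 + t ≠ 0) {j : Fin (n + 1)} (hj₀ : 0 < (j : ℕ))
    (hj : (j : ℕ) < n) : delta (MLO n t) j = (1 + t) ^ ((j : ℕ) + 1) / (2 * t) := by
  have hpred : (j : ℕ) - 1 + 1 = j := Nat.sub_add_cancel hj₀
  rw [delta, one_sub_MLO_apply_of_lt (Nat.sub_lt hj₀ one_pos) hj,
    one_sub_MLO_apply_self (by dsimp only; omega), one_sub_MLO_apply_self hj]
  simp only [hpred, Nat.sub_sub_self (Nat.one_le_of_lt hj₀), div_pow, one_pow]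
  field_simp

end MLO

theorem leadingones_expected_time_general (n : ℕ) (t : ℝ) (ht : 0 < t) :
    ∑ i : Fin (n + 1),
        (if (i : ℕ) < n then
          pLO n i * (1 / (1 - MLO n t) i i +
            ∑ j : Fin (n + 1),
              (if (i : ℕ) < (j : ℕ) ∧ (j : ℕ) < n then delta (MLO n t) j else 0))
        else 0) =
      (1 + t) / (2 * t ^ 2) * ((1 + t) ^ n - 1) := by
  have ht₀ : t ≠ 0 := ht.ne'
  have ht₁ : 1 + t ≠ 0 := by positivity
  have hfilter_lt : (range (n + 1)).filter (· < n) = range n := by ext; simp; omega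
  have hfilter_Ioo (i : ℕ) : (range (n + 1)).filter (fun j => i < j ∧ j < n) = Ioo i n := by
    ext; simp; omega
  calc _ = ∑ i ∈ range n, (1 / 2) ^ (i + 1) *
        ((1 + t) ^ (i + 1) / t + ∑ j ∈ Ioo i n, (1 + t) ^ (j + 1) / (2 * t)) := by
        rw [← hfilter_lt]
        refine sum_fin_ite_eq_sum_filter_range (· < n) _ _ fun i hi => ?_
        rw [pLO_of_lt hi, one_div_one_sub_MLO_apply_self ht₀ ht₁ hi, ← hfilter_Ioo]
        congr 2
        exact sum_fin_ite_eq_sum_filter_range (fun j => i < j ∧ j < n) _ _ fun j hj =>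
          delta_MLO ht₀ ht₁ (by omega) hj.2
    _ = ∑ j ∈ range n, (1 + t) / (2 * t) * (1 + t) ^ j := by
        rw [sum_range_mul_add_sum_Ioo]
        refine sum_congr rfl fun j _ => ?_
        rw [sum_range_half_pow_succ]
        field_simp
        ring
    _ = _ := by
        rw [← mul_sum, ← geom_sum_mul, add_sub_cancel_left]
        field_simp

theorem leadingones_expected_time (n : ℕ) (hn : 1 ≤ n) (t : ℝ) (ht : 0 < t) :
    ∑ i : Fin (n + 1),
        (if (i : ℕ) < n then
          pLO n i * (1 / (1 - MLO n t) i i +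
            ∑ j : Fin (n + 1),
              (if (i : ℕ) < (j : ℕ) ∧ (j : ℕ) < n then delta (MLO n t) j else 0))
        else 0) =
      (1 + t) / (2 * t ^ 2) * ((1 + t) ^ n - 1) :=
  leadingones_expected_time_general n t ht
end

section
/- Let c > 0 and 0 < s. Define T(n) = ((1+c/n^s)/(2(c/n^s)²))·((1+c/n^s)^n − 1). If s ≥ 1, then T(n) = Θ(n^{s+1}); in particular for s = 1, T(n) = Θ(n²). -/
/-!
Write `t = c / n ^ s`. Bernoulli's inequality and
`|a ^ n - b ^ n| ≤ |a - b| n max(|a|, |b|) ^ (n - 1)` give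
`n t ≤ (1 + t) ^ n - 1 ≤ n t (1 + t) ^ n`, so `T(n, t)` lies between `n / (2t)` and
`(1 + t) ^ (n + 1) · n / (2t)`. For `s ≥ 1` we have `(n + 1) t ≤ 2c`, hence the factor
`(1 + t) ^ (n + 1) ≤ exp (2c)` is bounded, and `n / (2t) = n ^ (s + 1) / (2c)`.
-/

open Filter Asymptotics Real

lemma Asymptotics.isTheta_of_eventually_le_of_le_mul {α : Type*} {l : Filter α} {f g : α → ℝ}
    (C : ℝ) (h : ∀ᶠ x in l, 0 ≤ g x ∧ g x ≤ f x ∧ f x ≤ C * g x) :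
    f =Θ[l] g := by
  refine ⟨.of_bound C ?_, .of_bound 1 ?_⟩ <;> filter_upwards [h] with x ⟨hg, hgf, hfC⟩
  · rwa [norm_of_nonneg (hg.trans hgf), norm_of_nonneg hg]
  · rwa [norm_of_nonneg (hg.trans hgf), norm_of_nonneg hg, one_mul]

lemma one_add_pow_sub_one_le {t : ℝ} (ht : 0 ≤ t) (n : ℕ) :
    (1 + t) ^ n - 1 ≤ n * t * (1 + t) ^ n := by
  have h := abs_pow_sub_pow_le (1 + t) 1 n
  rw [one_pow, add_sub_cancel_left, abs_of_nonneg ht, abs_of_nonneg (by linarith : 0 ≤ 1 + t),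
    abs_one, max_eq_left (by linarith)] at h
  calc (1 + t) ^ n - 1 ≤ t * n * (1 + t) ^ (n - 1) := (le_abs_self _).trans h
    _ ≤ n * t * (1 + t) ^ n := by
      rw [mul_comm t]
      gcongr
      exacts [le_add_of_nonneg_right ht, n.sub_le 1]

lemma one_add_pow_le_exp_mul {t : ℝ} (ht : -1 ≤ t) (n : ℕ) : (1 + t) ^ n ≤ exp (n * t) := by
  rw [exp_nat_mul]
  exact pow_le_pow_left₀ (by linarith) (by linarith [add_one_le_exp t]) n

noncomputable def bacoLeadingOnesTime (n : ℕ) (t : ℝ) : ℝ :=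
  (1 + t) / (2 * t ^ 2) * ((1 + t) ^ n - 1)

lemma div_le_bacoLeadingOnesTime {t : ℝ} (ht : 0 < t) (n : ℕ) :
    n / (2 * t) ≤ bacoLeadingOnesTime n t := by
  have hBernoulli : n * t ≤ (1 + t) ^ n - 1 := by
    linarith [one_add_mul_le_pow (by linarith : -2 ≤ t) n]
  calc (n : ℝ) / (2 * t) = 1 / (2 * t ^ 2) * (n * t) := by field_simp
    _ ≤ (1 + t) / (2 * t ^ 2) * ((1 + t) ^ n - 1) := by
      gcongr
      linarith

lemma bacoLeadingOnesTime_le {t : ℝ} (ht : 0 < t) (n : ℕ) :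
    bacoLeadingOnesTime n t ≤ (1 + t) ^ (n + 1) * (n / (2 * t)) := by
  calc bacoLeadingOnesTime n t ≤ (1 + t) / (2 * t ^ 2) * (n * t * (1 + t) ^ n) := by
        unfold bacoLeadingOnesTime
        gcongr
        exact one_add_pow_sub_one_le ht.le n
    _ = (1 + t) ^ (n + 1) * (n / (2 * t)) := by
      field_simp
      ring

lemma bacoLeadingOnesTime_div_rpow_bounds {c s : ℝ} (hc : 0 < c) (hs : 1 ≤ s) {n : ℕ}
    (hn : 1 ≤ n) :
    (2 * c)⁻¹ * (n : ℝ) ^ (s + 1) ≤ bacoLeadingOnesTime n (c / (n : ℝ) ^ s) ∧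
      bacoLeadingOnesTime n (c / (n : ℝ) ^ s) ≤
        exp (2 * c) * ((2 * c)⁻¹ * (n : ℝ) ^ (s + 1)) := by
  have hn1 : (1 : ℝ) ≤ n := by exact_mod_cast hn
  have hns : (n : ℝ) ≤ (n : ℝ) ^ s := by
    simpa using rpow_le_rpow_of_exponent_le hn1 hs
  set t := c / (n : ℝ) ^ s with htdef
  have ht : 0 < t := by positivity
  have hscale : (n : ℝ) / (2 * t) = (2 * c)⁻¹ * (n : ℝ) ^ (s + 1) := by
    rw [htdef, rpow_add (by linarith), rpow_one]
    field_simp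
  have hnt : n * t ≤ c := by
    rw [mul_div_assoc', div_le_iff₀ (by positivity), mul_comm]
    exact mul_le_mul_of_nonneg_left hns hc.le
  have hgrowth : (1 + t) ^ (n + 1) ≤ exp (2 * c) :=
    (one_add_pow_le_exp_mul (by linarith) _).trans
      (exp_le_exp.mpr (by push_cast; nlinarith))
  rw [← hscale]
  exact ⟨div_le_bacoLeadingOnesTime ht n,
    (bacoLeadingOnesTime_le ht n).trans (by gcongr)⟩

theorem leadingones_time_theta_polynomial_general (c s : ℝ) (hc : 0 < c)
    (hs : 1 ≤ s) :
    (fun n : ℕ =>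
        ((1 + c / (n : ℝ) ^ s) / (2 * (c / (n : ℝ) ^ s) ^ 2)) *
          ((1 + c / (n : ℝ) ^ s) ^ n - 1)) =Θ[atTop]
      fun n : ℕ => (n : ℝ) ^ (s + 1) := by
  have hscaled : (fun n : ℕ => bacoLeadingOnesTime n (c / (n : ℝ) ^ s)) =Θ[atTop]
      fun n : ℕ => (2 * c)⁻¹ * (n : ℝ) ^ (s + 1) := by
    refine isTheta_of_eventually_le_of_le_mul (exp (2 * c)) ?_
    filter_upwards [eventually_ge_atTop 1] with n hn
    exact ⟨by positivity, bacoLeadingOnesTime_div_rpow_bounds hc hs hn⟩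
  exact (isTheta_const_mul_right (by positivity)).mp hscaled

theorem leadingones_time_theta_polynomial (c s : ℝ) (hc : 0 < c) (hs0 : 0 < s)
    (hs : 1 ≤ s) :
    (fun n : ℕ =>
        ((1 + c / (n : ℝ) ^ s) / (2 * (c / (n : ℝ) ^ s) ^ 2)) *
          ((1 + c / (n : ℝ) ^ s) ^ n - 1)) =Θ[atTop]
      fun n : ℕ => (n : ℝ) ^ (s + 1) :=
  leadingones_time_theta_polynomial_general c s hc hs
end

section
/- Let n ≥ 1 and t > 0. Define T(n,t) = (1/(t·n!))·∑_{i=1}^{n−1} i·i!·( ∏_{r=i}^{n−1}(1+r·t) + ∑_{k=1}^{i−1} (k/(k+1))·∏_{r=k}^{n−1}(1+r·t) ). Then T(n,t) ≥ (n−2)/(2t). -/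
open Filter Asymptotics

/-- Exact expected optimization time of BACO on Sorting with `n` keys and pheromone ratio `t`. -/
noncomputable def Tsort (n : ℕ) (t : ℝ) : ℝ :=
  (1 / (t * (Nat.factorial n : ℝ))) *
    ∑ i ∈ Finset.Icc 1 (n - 1),
      (i : ℝ) * (Nat.factorial i : ℝ) *
        ((∏ r ∈ Finset.Icc i (n - 1), (1 + (r : ℝ) * t)) +
          ∑ k ∈ Finset.Icc 1 (i - 1),
            ((k : ℝ) / ((k : ℝ) + 1)) * ∏ r ∈ Finset.Icc k (n - 1), (1 + (r : ℝ) * t))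

/-!
Every factor `1 + r t` is at least `1` and every weight `k / (k + 1)` with `k ≥ 1` is at least
`1 / 2`, so the bracket attached to the index `i` is at least `(i + 1) / 2`. Keeping only the last
summand `i = n - 1` of the nonnegative sum then gives
`T(n, t) ≥ (n - 1) (n - 1)! (n / 2) / (t n!) = (n - 1) / (2 t)` for `n ≥ 2`; for `n ≤ 2` the
claimed bound is nonpositive.
-/

open Finset
open scoped Nat

lemma one_le_prod_one_add_mul {t : ℝ} (ht : 0 ≤ t) (s : Finset ℕ) :
    1 ≤ ∏ r ∈ s, (1 + (r : ℝ) * t) :=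
  one_le_prod fun r _ => le_add_of_nonneg_right (by positivity)

lemma half_le_div_add_one {x : ℝ} (hx : 1 ≤ x) : 1 / 2 ≤ x / (x + 1) := by
  rw [div_le_div_iff₀ two_pos (by linarith)]
  linarith

lemma half_mul_le_sum_Icc_div_add_one_mul (m : ℕ) {f : ℕ → ℝ} (hf : ∀ k, 1 ≤ f k) :
    (m : ℝ) / 2 ≤ ∑ k ∈ Icc 1 m, ((k : ℝ) / ((k : ℝ) + 1)) * f k := by
  calc (m : ℝ) / 2 = ∑ _k ∈ Icc 1 m, (1 / 2 : ℝ) := by simp [div_eq_mul_inv]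
    _ ≤ ∑ k ∈ Icc 1 m, ((k : ℝ) / ((k : ℝ) + 1)) * f k := by
      refine sum_le_sum fun k hk => ?_
      have hk : (1 : ℝ) ≤ k := by exact_mod_cast (mem_Icc.mp hk).1
      have hweight := half_le_div_add_one hk
      nlinarith [hf k]

noncomputable def tsortBracket (n : ℕ) (t : ℝ) (i : ℕ) : ℝ :=
  (∏ r ∈ Icc i (n - 1), (1 + (r : ℝ) * t)) +
    ∑ k ∈ Icc 1 (i - 1), ((k : ℝ) / ((k : ℝ) + 1)) * ∏ r ∈ Icc k (n - 1), (1 + (r : ℝ) * t)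

lemma Tsort_eq_sum_tsortBracket (n : ℕ) (t : ℝ) :
    Tsort n t =
      1 / (t * (n ! : ℝ)) * ∑ i ∈ Icc 1 (n - 1), (i : ℝ) * (i ! : ℝ) * tsortBracket n t i :=
  rfl

lemma add_one_div_two_le_tsortBracket (n : ℕ) {t : ℝ} (ht : 0 ≤ t) (i : ℕ) :
    ((i : ℝ) + 1) / 2 ≤ tsortBracket n t i := by
  have hprod := one_le_prod_one_add_mul ht (Icc i (n - 1))
  rcases i with _ | j
  · have hempty : Icc 1 (0 - 1) = ∅ := rfl
    simp only [tsortBracket, hempty, sum_empty]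
    linarith
  · have hsum := half_mul_le_sum_Icc_div_add_one_mul j
      (fun k => one_le_prod_one_add_mul ht (Icc k (n - 1)))
    simp only [tsortBracket, Nat.add_sub_cancel]
    push_cast
    linarith

lemma tsortBracket_nonneg (n : ℕ) {t : ℝ} (ht : 0 ≤ t) (i : ℕ) : 0 ≤ tsortBracket n t i :=
  (by positivity : (0 : ℝ) ≤ ((i : ℝ) + 1) / 2).trans (add_one_div_two_le_tsortBracket n ht i)

lemma Tsort_nonneg (n : ℕ) {t : ℝ} (ht : 0 ≤ t) : 0 ≤ Tsort n t := by
  rw [Tsort_eq_sum_tsortBracket]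
  exact mul_nonneg (by positivity)
    (sum_nonneg fun i _ => mul_nonneg (by positivity) (tsortBracket_nonneg n ht i))

lemma sub_one_div_le_Tsort {n : ℕ} (hn : 2 ≤ n) {t : ℝ} (ht : 0 < t) :
    ((n : ℝ) - 1) / (2 * t) ≤ Tsort n t := by
  obtain ⟨m, rfl⟩ : ∃ m, n = m + 1 := ⟨n - 1, by omega⟩
  have hterm_nonneg : ∀ i ∈ Icc 1 m, 0 ≤ (i : ℝ) * (i ! : ℝ) * tsortBracket (m + 1) t i :=
    fun i _ => mul_nonneg (by positivity) (tsortBracket_nonneg (m + 1) ht.le i)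
  have hlast : (m : ℝ) * (m ! : ℝ) * (((m : ℝ) + 1) / 2) ≤
      ∑ i ∈ Icc 1 m, (i : ℝ) * (i ! : ℝ) * tsortBracket (m + 1) t i :=
    (mul_le_mul_of_nonneg_left (add_one_div_two_le_tsortBracket (m + 1) ht.le m)
      (by positivity)).trans (single_le_sum hterm_nonneg (mem_Icc.mpr ⟨by omega, le_rfl⟩))
  rw [Tsort_eq_sum_tsortBracket, Nat.add_sub_cancel]
  calc (((m + 1 : ℕ) : ℝ) - 1) / (2 * t)
      = 1 / (t * ((m + 1)! : ℝ)) * ((m : ℝ) * (m ! : ℝ) * (((m : ℝ) + 1) / 2)) := by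
        rw [Nat.factorial_succ]
        push_cast
        field_simp
        ring
    _ ≤ _ := mul_le_mul_of_nonneg_left hlast (by positivity)

theorem sorting_time_lower_bound_general (n : ℕ) (t : ℝ) (ht : 0 < t) :
    ((n : ℝ) - 2) / (2 * t) ≤ Tsort n t := by
  rcases le_or_gt n 2 with hn | hn
  · have hnum : (n : ℝ) - 2 ≤ 0 := sub_nonpos.mpr (by exact_mod_cast hn)
    exact (div_nonpos_of_nonpos_of_nonneg hnum (by positivity)).trans (Tsort_nonneg n ht.le)
  · calc ((n : ℝ) - 2) / (2 * t) ≤ ((n : ℝ) - 1) / (2 * t) := by gcongr; linarith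
      _ ≤ Tsort n t := sub_one_div_le_Tsort hn.le ht

theorem sorting_time_lower_bound (n : ℕ) (hn : 1 ≤ n) (t : ℝ) (ht : 0 < t) :
    ((n : ℝ) - 2) / (2 * t) ≤ Tsort n t :=
  sorting_time_lower_bound_general n t ht
end

section
/- Let n ≥ 1 and t > 0. Define T(n,t) = (1/(t·n!))·∑_{i=1}^{n−1} i·i!·( ∏_{r=i}^{n−1}(1+r·t) + ∑_{k=1}^{i−1} (k/(k+1))·∏_{r=k}^{n−1}(1+r·t) ). Then T(n,t) ≤ (n/t)·(1+n·t)^n. -/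
open Filter Asymptotics

/-!
Every product `∏_{r=k}^{n-1} (1 + r t)` has at most `n` factors, each at most `1 + n t`, so it is
bounded by `B = (1 + n t)^n`. Since `k/(k+1) ≤ 1`, the bracket of the `i`-th summand is then at most
`i B`, and it remains to check `∑_{i<n} i² i! ≤ n · n!`, which follows from
`m · m! + m² · m! = m · (m+1)!`.
-/

open Finset
open scoped Nat

theorem sum_range_mul_self_mul_factorial_le (n : ℕ) :
    ∑ i ∈ range n, i * i * i ! ≤ n * n ! := by
  induction n with
  | zero => simp
  | succ m ih =>
    calc ∑ i ∈ range (m + 1), i * i * i !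
        ≤ m * m ! + m * m * m ! := by rw [sum_range_succ]; omega
      _ = m * (m + 1)! := by rw [Nat.factorial_succ]; ring
      _ ≤ (m + 1) * (m + 1)! := Nat.mul_le_mul_right _ m.le_succ

theorem sum_Icc_mul_self_mul_factorial_le (n : ℕ) :
    ∑ i ∈ Icc 1 (n - 1), i * i * i ! ≤ n * n ! :=
  calc ∑ i ∈ Icc 1 (n - 1), i * i * i !
      ≤ ∑ i ∈ range n, i * i * i ! :=
        sum_le_sum_of_subset fun i hi ↦ by simp only [mem_Icc, mem_range] at hi ⊢; omega
    _ ≤ n * n ! := sum_range_mul_self_mul_factorial_le n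

section ProdOneAddMul

variable {t : ℝ} (ht : 0 ≤ t)
include ht

theorem prod_one_add_mul_nonneg (s : Finset ℕ) : 0 ≤ ∏ r ∈ s, (1 + (r : ℝ) * t) :=
  prod_nonneg fun r _ ↦ by positivity

theorem prod_Icc_one_add_mul_le {k : ℕ} (hk : 1 ≤ k) (n : ℕ) :
    ∏ r ∈ Icc k (n - 1), (1 + (r : ℝ) * t) ≤ (1 + (n : ℝ) * t) ^ n := by
  have hfactor : ∀ r ∈ Icc k (n - 1), 1 + (r : ℝ) * t ≤ 1 + (n : ℝ) * t := fun r hr ↦ by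
    have : (r : ℝ) ≤ n := by exact_mod_cast (by simp only [mem_Icc] at hr; omega : r ≤ n)
    gcongr
  calc ∏ r ∈ Icc k (n - 1), (1 + (r : ℝ) * t)
      ≤ (1 + (n : ℝ) * t) ^ #(Icc k (n - 1)) := by
        rw [← prod_const]
        exact prod_le_prod (fun r _ ↦ by positivity) hfactor
    _ ≤ (1 + (n : ℝ) * t) ^ n := by
        have hcard : #(Icc k (n - 1)) ≤ n := by simp only [Nat.card_Icc]; omega
        exact pow_le_pow_right₀ (le_add_of_nonneg_right (by positivity)) hcard

theorem Tsort_bracket_le {i : ℕ} (hi : 1 ≤ i) (n : ℕ) :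
    (∏ r ∈ Icc i (n - 1), (1 + (r : ℝ) * t)) +
        ∑ k ∈ Icc 1 (i - 1), ((k : ℝ) / ((k : ℝ) + 1)) * ∏ r ∈ Icc k (n - 1), (1 + (r : ℝ) * t)
      ≤ i * (1 + (n : ℝ) * t) ^ n := by
  set B := (1 + (n : ℝ) * t) ^ n
  have hterm : ∀ k ∈ Icc 1 (i - 1),
      ((k : ℝ) / ((k : ℝ) + 1)) * ∏ r ∈ Icc k (n - 1), (1 + (r : ℝ) * t) ≤ B := fun k hk ↦ by
    have hfrac : (k : ℝ) / ((k : ℝ) + 1) ≤ 1 := by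
      rw [div_le_one (by positivity)]; linarith
    calc ((k : ℝ) / ((k : ℝ) + 1)) * ∏ r ∈ Icc k (n - 1), (1 + (r : ℝ) * t)
        ≤ 1 * B := mul_le_mul hfrac (prod_Icc_one_add_mul_le ht (mem_Icc.mp hk).1 n)
          (prod_one_add_mul_nonneg ht _) zero_le_one
      _ = B := one_mul B
  have hsum := sum_le_card_nsmul _ _ _ hterm
  rw [Nat.card_Icc, Nat.add_sub_cancel, nsmul_eq_mul, Nat.cast_sub hi, Nat.cast_one] at hsum
  linarith [prod_Icc_one_add_mul_le ht hi n]

end ProdOneAddMul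

theorem sorting_time_upper_bound_general (n : ℕ) (t : ℝ) (ht : 0 < t) :
    Tsort n t ≤ ((n : ℝ) / t) * (1 + (n : ℝ) * t) ^ n := by
  have hB : 0 ≤ (1 + (n : ℝ) * t) ^ n := by positivity
  set B := (1 + (n : ℝ) * t) ^ n
  have hsum : ∑ i ∈ Icc 1 (n - 1), (i : ℝ) * (i ! : ℝ) *
        ((∏ r ∈ Icc i (n - 1), (1 + (r : ℝ) * t)) +
          ∑ k ∈ Icc 1 (i - 1), ((k : ℝ) / ((k : ℝ) + 1)) * ∏ r ∈ Icc k (n - 1), (1 + (r : ℝ) * t))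
      ≤ (n * n ! : ℕ) * B :=
    calc _ ≤ ∑ i ∈ Icc 1 (n - 1), (i : ℝ) * (i ! : ℝ) * (i * B) :=
          sum_le_sum fun i hi ↦ mul_le_mul_of_nonneg_left
            (Tsort_bracket_le ht.le (mem_Icc.mp hi).1 n) (by positivity)
      _ = (∑ i ∈ Icc 1 (n - 1), i * i * i ! : ℕ) * B := by
          push_cast; rw [sum_mul]; exact sum_congr rfl fun i _ ↦ by ring
      _ ≤ (n * n ! : ℕ) * B := by
          gcongr; exact sum_Icc_mul_self_mul_factorial_le n
  calc Tsort n t ≤ 1 / (t * n !) * ((n * n ! : ℕ) * B) :=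
        mul_le_mul_of_nonneg_left hsum (by positivity)
    _ = n / t * B := by
        have : (n ! : ℝ) ≠ 0 := by positivity
        push_cast; field_simp

theorem sorting_time_upper_bound (n : ℕ) (hn : 1 ≤ n) (t : ℝ) (ht : 0 < t) :
    Tsort n t ≤ ((n : ℝ) / t) * (1 + (n : ℝ) * t) ^ n :=
  sorting_time_upper_bound_general n t ht
end

section
/- Define T(n,t) = (1/(t·n!))·∑_{i=1}^{n−1} i·i!·( ∏_{r=i}^{n−1}(1+r·t) + ∑_{k=1}^{i−1} (k/(k+1))·∏_{r=k}^{n−1}(1+r·t) ). For every function t(n) > 0, T(n, t(n)) = Ω(n³). -/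
/-!
Only the summand `i = n - 1` of `Tsort n t` is kept, without its leading product. Each remaining
product `∏_{r=k}^{n-1} (1 + r t)` is at least `t · ∑_{r=k}^{n-1} r ≥ t · k (n - k)` (Weierstrass'
product inequality), so the factor `t` cancels against the prefactor `1 / (t n!)`, while
`(n - 1) · (n - 1)! / n! = (n - 1) / n` and `k / (k + 1) ≥ 1 / 2`. What remains is
`∑_{k=1}^{n-2} k (n - k) = (n - 2)(n - 1)(n + 3) / 6`, which is cubic in `n` whatever `t` is.
-/

open Filter Asymptotics Finset
open scoped Nat

theorem Finset.one_add_sum_le_prod_one_add {ι R : Type*} [CommSemiring R] [PartialOrder R]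
    [IsOrderedRing R] (s : Finset ι) {f : ι → R} (hf : ∀ i ∈ s, 0 ≤ f i) :
    1 + ∑ i ∈ s, f i ≤ ∏ i ∈ s, (1 + f i) := by
  classical
  induction s using Finset.induction_on with
  | empty => simp
  | insert a s ha ih =>
    rw [prod_insert ha, sum_insert ha]
    have hfa := hf a (mem_insert_self a s)
    have hsum := sum_nonneg fun i hi => hf i (mem_insert_of_mem hi)
    calc 1 + (f a + ∑ i ∈ s, f i) ≤ 1 + (f a + ∑ i ∈ s, f i) + f a * ∑ i ∈ s, f i :=
          le_add_of_nonneg_right (mul_nonneg hfa hsum)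
      _ = (1 + f a) * (1 + ∑ i ∈ s, f i) := by ring
      _ ≤ (1 + f a) * ∏ i ∈ s, (1 + f i) :=
          mul_le_mul_of_nonneg_left (ih fun i hi => hf i (mem_insert_of_mem hi))
            (add_nonneg zero_le_one hfa)

theorem mul_sub_le_sum_Icc {k n : ℕ} (hkn : k < n) :
    (k : ℝ) * (n - k) ≤ ∑ r ∈ Icc k (n - 1), (r : ℝ) := by
  have hcard : #(Icc k (n - 1)) = n - k := by rw [Nat.card_Icc]; omega
  have := card_nsmul_le_sum (Icc k (n - 1)) (fun r : ℕ => (r : ℝ)) k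
    fun r hr => Nat.cast_le.mpr (mem_Icc.mp hr).1
  rwa [hcard, nsmul_eq_mul, Nat.cast_sub hkn.le, mul_comm] at this

theorem mul_mul_sub_le_prod_Icc_one_add_mul {k n : ℕ} (hkn : k < n) {t : ℝ} (ht : 0 ≤ t) :
    t * (k * (n - k)) ≤ ∏ r ∈ Icc k (n - 1), (1 + (r : ℝ) * t) :=
  calc t * (k * (n - k)) ≤ ∑ r ∈ Icc k (n - 1), (r : ℝ) * t := by
        rw [← sum_mul, mul_comm]
        exact mul_le_mul_of_nonneg_right (mul_sub_le_sum_Icc hkn) ht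
    _ ≤ 1 + ∑ r ∈ Icc k (n - 1), (r : ℝ) * t := le_add_of_nonneg_left zero_le_one
    _ ≤ _ := one_add_sum_le_prod_one_add _ fun r _ => by positivity

theorem sum_Icc_mul_sub (m : ℕ) (c : ℝ) :
    ∑ k ∈ Icc 1 m, (k : ℝ) * (c - k) = m * (m + 1) * (3 * c - 2 * m - 1) / 6 := by
  induction m with
  | zero => simp
  | succ m ih =>
    rw [sum_Icc_succ_top (by omega), ih]
    push_cast
    ring

theorem Tsort_ge_last_summand {n : ℕ} (hn : 2 ≤ n) {t : ℝ} (ht : 0 < t) :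
    (n - 1) / (n * t) * ∑ k ∈ Icc 1 (n - 2),
      (k : ℝ) / (k + 1) * ∏ r ∈ Icc k (n - 1), (1 + (r : ℝ) * t) ≤ Tsort n t := by
  set P : ℕ → ℝ := fun k => ∏ r ∈ Icc k (n - 1), (1 + (r : ℝ) * t)
  have hP : ∀ k, 0 < P k := fun k => prod_pos fun r _ => by positivity
  have hinner : ∀ i : ℕ, 0 ≤ ∑ k ∈ Icc 1 (i - 1), (k : ℝ) / (k + 1) * P k :=
    fun i => sum_nonneg fun k _ => mul_nonneg (by positivity) (hP k).le
  set F : ℕ → ℝ := fun i => (i : ℝ) * i ! * (P i + ∑ k ∈ Icc 1 (i - 1), (k : ℝ) / (k + 1) * P k)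
  have hF : ∀ i, 0 ≤ F i := fun i => mul_nonneg (by positivity) (add_nonneg (hP i).le (hinner i))
  have hlast : ((n - 1 : ℕ) : ℝ) * (n - 1)! *
      ∑ k ∈ Icc 1 (n - 2), (k : ℝ) / (k + 1) * P k ≤ ∑ i ∈ Icc 1 (n - 1), F i :=
    calc _ ≤ F (n - 1) := by
          simp only [F, show n - 1 - 1 = n - 2 by omega]
          exact mul_le_mul_of_nonneg_left (le_add_of_nonneg_left (hP _).le) (by positivity)
      _ ≤ _ := single_le_sum (fun i _ => hF i) (mem_Icc.mpr ⟨by omega, le_rfl⟩)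
  have hfact : (n ! : ℝ) = n * (n - 1)! := by
    rw [← Nat.mul_factorial_pred (by omega : n ≠ 0)]; push_cast; rfl
  calc (n - 1) / (n * t) * ∑ k ∈ Icc 1 (n - 2), (k : ℝ) / (k + 1) * P k
      = 1 / (t * n !) * (((n - 1 : ℕ) : ℝ) * (n - 1)! *
          ∑ k ∈ Icc 1 (n - 2), (k : ℝ) / (k + 1) * P k) := by
        rw [hfact, Nat.cast_sub (by omega : 1 ≤ n)]
        field_simp
        push_cast
        ring
    _ ≤ Tsort n t := mul_le_mul_of_nonneg_left hlast (by positivity)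

theorem sum_Icc_mul_sub_le_sum_Icc_prod {n : ℕ} {t : ℝ} (ht : 0 ≤ t) :
    t / 2 * ∑ k ∈ Icc 1 (n - 2), (k : ℝ) * (n - k) ≤
      ∑ k ∈ Icc 1 (n - 2), (k : ℝ) / (k + 1) * ∏ r ∈ Icc k (n - 1), (1 + (r : ℝ) * t) := by
  rw [mul_sum]
  refine sum_le_sum fun k hk => ?_
  obtain ⟨hk1, hkn⟩ := mem_Icc.mp hk
  have hhalf : (1 : ℝ) / 2 ≤ k / (k + 1) := by
    rw [div_le_div_iff₀ two_pos (by positivity)]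
    have : (1 : ℝ) ≤ k := by exact_mod_cast hk1
    linarith
  have hkn' : (k : ℝ) ≤ n := by exact_mod_cast (by omega : k ≤ n)
  calc t / 2 * (k * (n - k)) = 1 / 2 * (t * (k * (n - k))) := by ring
    _ ≤ k / (k + 1) * ∏ r ∈ Icc k (n - 1), (1 + (r : ℝ) * t) :=
        mul_le_mul hhalf (mul_mul_sub_le_prod_Icc_one_add_mul (by omega) ht)
          (mul_nonneg ht (mul_nonneg k.cast_nonneg (sub_nonneg.mpr hkn'))) (by positivity)

theorem cube_div_le_Tsort {n : ℕ} (hn : 4 ≤ n) {t : ℝ} (ht : 0 < t) :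
    (n : ℝ) ^ 3 / 96 ≤ Tsort n t := by
  have hsum : ∑ k ∈ Icc 1 (n - 2), (k : ℝ) * (n - k) = (n - 2) * (n - 1) * (n + 3) / 6 := by
    rw [sum_Icc_mul_sub, Nat.cast_sub (by omega : 2 ≤ n)]
    ring
  have hn' : (4 : ℝ) ≤ n := by exact_mod_cast hn
  have hpos : (0 : ℝ) < n := by linarith
  have hlow := (mul_le_mul_of_nonneg_left (sum_Icc_mul_sub_le_sum_Icc_prod (n := n) ht.le)
    (div_nonneg (by linarith) (by positivity))).trans (Tsort_ge_last_summand (by omega) ht)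
  have heq : (n - 1) / (n * t) * (t / 2 * ((n - 2) * (n - 1) * (n + 3) / 6)) =
      (n - 1) ^ 2 * (n - 2) * (n + 3) / (12 * n) := by
    field_simp; ring
  rw [hsum, heq] at hlow
  refine le_trans ?_ hlow
  rw [div_le_div_iff₀ (by norm_num) (by positivity)]
  nlinarith [mul_nonneg (mul_nonneg hpos.le hpos.le) (sub_nonneg.mpr hn')]

theorem sorting_time_omega_cubed (t : ℕ → ℝ) (ht : ∀ n, 0 < t n) :
    (fun n : ℕ => (n : ℝ) ^ 3) =O[atTop] fun n : ℕ => Tsort n (t n) := by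
  refine IsBigO.of_bound 96 ((eventually_ge_atTop 4).mono fun n hn => ?_)
  have hT := cube_div_le_Tsort hn (ht n)
  have hcube : (0 : ℝ) ≤ n ^ 3 := by positivity
  rw [Real.norm_of_nonneg hcube, Real.norm_of_nonneg ((div_nonneg hcube (by norm_num)).trans hT)]
  linarith
end

section
/- Define T(n,t) as the exact Sorting formula with t = c/n^s for constants c > 0 and s ≥ 2. Then T(n, c/n^s) = Θ(n^{s+1}). -/
/-! If `n ^ 2 * t ≤ C`, every product `∏_{r=k}^{n-1} (1 + r t)` lies in `[1, exp C]`, so the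
bracket attached to index `i` lies between `(i + 1) / 2` and `i * exp C`. The top index alone
then gives `T(n,t) ≥ (n - 1) / (2t)`, while `∑ i * i! = n! - 1` gives `T(n,t) ≤ exp C * n / t`:
thus `T(n,t) ≍ n / t`, which for `t = c / n ^ s` with `s ≥ 2` is `n ^ (s + 1) / c`. -/

open Filter Asymptotics

open Finset Real
open scoped Nat

noncomputable def sortProd (n : ℕ) (t : ℝ) (k : ℕ) : ℝ :=
  ∏ r ∈ Icc k (n - 1), (1 + (r : ℝ) * t)

noncomputable def sortWeight (n : ℕ) (t : ℝ) (i : ℕ) : ℝ :=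
  sortProd n t i + ∑ k ∈ Icc 1 (i - 1), ((k : ℝ) / ((k : ℝ) + 1)) * sortProd n t k

lemma Tsort_eq (n : ℕ) (t : ℝ) :
    Tsort n t = 1 / (t * n !) * ∑ i ∈ Icc 1 (n - 1), (i : ℝ) * i ! * sortWeight n t i :=
  rfl

lemma sum_range_mul_factorial_add_one (n : ℕ) : ∑ i ∈ range n, i * i ! + 1 = n ! := by
  induction n with
  | zero => rfl
  | succ n ih => rw [sum_range_succ, add_right_comm, ih, Nat.factorial_succ]; ring

lemma sum_Icc_le_sq (k n : ℕ) : ∑ r ∈ Icc k (n - 1), r ≤ n ^ 2 :=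
  calc ∑ r ∈ Icc k (n - 1), r ≤ ∑ r ∈ range n, r :=
        sum_le_sum_of_ne_zero fun r hr hr0 => by simp only [mem_Icc, mem_range] at hr ⊢; omega
    _ ≤ #(range n) • n := sum_le_card_nsmul _ _ _ fun r hr => (mem_range.1 hr).le
    _ = n ^ 2 := by rw [card_range, smul_eq_mul, sq]

section Bounds

variable {n : ℕ} {t : ℝ}

lemma one_le_sortProd (ht : 0 ≤ t) (k : ℕ) : 1 ≤ sortProd n t k :=
  one_le_prod fun r _ => le_add_of_nonneg_right (by positivity)

lemma sortProd_le_exp (ht : 0 ≤ t) (k : ℕ) : sortProd n t k ≤ exp ((n : ℝ) ^ 2 * t) := by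
  have hsum : ∑ r ∈ Icc k (n - 1), (r : ℝ) ≤ (n : ℝ) ^ 2 := by
    rw [← Nat.cast_sum]; exact_mod_cast sum_Icc_le_sq k n
  calc sortProd n t k ≤ ∏ r ∈ Icc k (n - 1), exp ((r : ℝ) * t) :=
        prod_le_prod (fun _ _ => by positivity) fun r _ => by
          linarith [add_one_le_exp ((r : ℝ) * t)]
    _ = exp ((∑ r ∈ Icc k (n - 1), (r : ℝ)) * t) := by rw [← exp_sum, sum_mul]
    _ ≤ exp ((n : ℝ) ^ 2 * t) := by gcongr

lemma half_succ_le_sortWeight (ht : 0 ≤ t) (i : ℕ) : ((i : ℝ) + 1) / 2 ≤ sortWeight n t i := by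
  have hterm : ∀ k ∈ Icc 1 (i - 1), (1 : ℝ) / 2 ≤ (k : ℝ) / (k + 1) * sortProd n t k := by
    intro k hk
    have hk : (1 : ℝ) ≤ k := by exact_mod_cast (mem_Icc.1 hk).1
    calc (1 : ℝ) / 2 ≤ (k : ℝ) / (k + 1) := by
          rw [div_le_div_iff₀ (by norm_num) (by positivity)]; linarith
      _ ≤ (k : ℝ) / (k + 1) * sortProd n t k :=
          le_mul_of_one_le_right (by positivity) (one_le_sortProd ht k)
  have hcard : (i : ℝ) - 1 ≤ #(Icc 1 (i - 1)) := by
    rw [Nat.card_Icc]; rcases i with _ | i <;> simp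
  have hsum := card_nsmul_le_sum _ _ _ hterm
  rw [nsmul_eq_mul] at hsum
  unfold sortWeight
  linarith [one_le_sortProd (n := n) ht i]

lemma sortWeight_le {M : ℝ} (ht : 0 ≤ t) (hM : ∀ k, sortProd n t k ≤ M) {i : ℕ} (hi : 1 ≤ i) :
    sortWeight n t i ≤ i * M := by
  have hterm : ∀ k ∈ Icc 1 (i - 1), (k : ℝ) / (k + 1) * sortProd n t k ≤ M := fun k _ =>
    (mul_le_of_le_one_left (zero_le_one.trans (one_le_sortProd ht k))
      (div_le_one_of_le₀ (by linarith) (by positivity))).trans (hM k)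
  have hsum := sum_le_card_nsmul _ _ _ hterm
  rw [nsmul_eq_mul, Nat.card_Icc, Nat.add_sub_cancel, Nat.cast_sub hi, Nat.cast_one] at hsum
  unfold sortWeight
  linarith [hM i]

lemma Tsort_le {M : ℝ} (ht : 0 < t) (hM : ∀ k, sortProd n t k ≤ M) : Tsort n t ≤ n * M / t := by
  have hM0 : 0 ≤ M := zero_le_one.trans ((one_le_sortProd ht.le 0).trans (hM 0))
  have hfact : ∑ i ∈ Icc 1 (n - 1), (i : ℝ) * i ! ≤ n ! := by
    have hsub : Icc 1 (n - 1) ⊆ range n := fun i hi => by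
      simp only [mem_Icc, mem_range] at hi ⊢; omega
    calc ∑ i ∈ Icc 1 (n - 1), (i : ℝ) * i ! ≤ ∑ i ∈ range n, (i : ℝ) * i ! :=
          sum_le_sum_of_subset_of_nonneg hsub fun _ _ _ => by positivity
      _ ≤ n ! := by exact_mod_cast (sum_range_mul_factorial_add_one n).le.trans' (Nat.le_succ _)
  have hS : ∑ i ∈ Icc 1 (n - 1), (i : ℝ) * i ! * sortWeight n t i ≤ n * M * n ! := by
    calc ∑ i ∈ Icc 1 (n - 1), (i : ℝ) * i ! * sortWeight n t i
        ≤ ∑ i ∈ Icc 1 (n - 1), (i : ℝ) * i ! * (n * M) := by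
          refine sum_le_sum fun i hi => mul_le_mul_of_nonneg_left ?_ (by positivity)
          obtain ⟨hi1, hin⟩ := mem_Icc.1 hi
          calc sortWeight n t i ≤ i * M := sortWeight_le ht.le hM hi1
            _ ≤ n * M := by gcongr; omega
      _ = n * M * ∑ i ∈ Icc 1 (n - 1), (i : ℝ) * i ! := by rw [← sum_mul, mul_comm]
      _ ≤ n * M * n ! := by gcongr
  rw [Tsort_eq]
  calc 1 / (t * n !) * ∑ i ∈ Icc 1 (n - 1), (i : ℝ) * i ! * sortWeight n t i
      ≤ 1 / (t * n !) * (n * M * n !) := by gcongr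
    _ = n * M / t := by field_simp

lemma le_Tsort (ht : 0 < t) (hn : 2 ≤ n) : ((n : ℝ) - 1) / (2 * t) ≤ Tsort n t := by
  have hmem : n - 1 ∈ Icc 1 (n - 1) := mem_Icc.2 ⟨by omega, le_rfl⟩
  have hcast : ((n - 1 : ℕ) : ℝ) = n - 1 := by rw [Nat.cast_sub (by omega), Nat.cast_one]
  have hfact : (n : ℝ) * (n - 1)! = n ! := by exact_mod_cast Nat.mul_factorial_pred (by omega)
  have hS : ((n : ℝ) - 1) * n ! / 2 ≤ ∑ i ∈ Icc 1 (n - 1), (i : ℝ) * i ! * sortWeight n t i := by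
    refine le_trans ?_ (single_le_sum (fun i _ => ?_) hmem)
    · calc ((n : ℝ) - 1) * n ! / 2 = ((n - 1 : ℕ) : ℝ) * (n - 1)! * (((n - 1 : ℕ) + 1) / 2) := by
            rw [hcast, ← hfact]; ring
        _ ≤ ((n - 1 : ℕ) : ℝ) * (n - 1)! * sortWeight n t (n - 1) := by
            gcongr; exact half_succ_le_sortWeight ht.le _
    · have : (0 : ℝ) ≤ sortWeight n t i :=
        le_trans (by positivity) (half_succ_le_sortWeight ht.le i)
      positivity
  rw [Tsort_eq]
  calc ((n : ℝ) - 1) / (2 * t) = 1 / (t * n !) * (((n : ℝ) - 1) * n ! / 2) := by field_simp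
    _ ≤ _ := by gcongr

end Bounds

theorem isTheta_Tsort {t : ℕ → ℝ} {C : ℝ} (ht : ∀ᶠ n : ℕ in atTop, 0 < t n)
    (hC : ∀ᶠ n : ℕ in atTop, (n : ℝ) ^ 2 * t n ≤ C) :
    (fun n => Tsort n (t n)) =Θ[atTop] fun n => (n : ℝ) / t n := by
  have hbounds : ∀ᶠ n : ℕ in atTop, 0 ≤ (n : ℝ) / t n ∧ (n : ℝ) / t n ≤ 4 * Tsort n (t n) ∧
      Tsort n (t n) ≤ exp C * ((n : ℝ) / t n) := by
    filter_upwards [ht, hC, eventually_ge_atTop 2] with n htn hCn hn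
    have hlow := le_Tsort htn hn
    have hup := Tsort_le htn fun k => (sortProd_le_exp htn.le k).trans (exp_le_exp.2 hCn)
    have hn2 : (2 : ℝ) ≤ n := by exact_mod_cast hn
    refine ⟨by positivity, ?_, by rwa [mul_div_assoc', mul_comm]⟩
    calc (n : ℝ) / t n ≤ 4 * (((n : ℝ) - 1) / (2 * t n)) := by
          rw [mul_div_assoc', div_le_div_iff₀ htn (by positivity)]; nlinarith
      _ ≤ 4 * Tsort n (t n) := by gcongr
  refine ⟨IsBigO.of_bound (exp C) ?_, IsBigO.of_bound 4 ?_⟩ <;>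
    filter_upwards [hbounds] with n ⟨hpos, hlow, hup⟩ <;>
    rw [norm_of_nonneg hpos, norm_of_nonneg (by linarith)] <;> assumption

theorem sorting_time_theta_poly (c s : ℝ) (hc : 0 < c) (hs : 2 ≤ s) :
    (fun n : ℕ => Tsort n (c / (n : ℝ) ^ s)) =Θ[atTop] fun n : ℕ => (n : ℝ) ^ (s + 1) := by
  have hpos : ∀ᶠ n : ℕ in atTop, (0 : ℝ) < n :=
    (eventually_gt_atTop 0).mono fun _ hn => Nat.cast_pos.2 hn
  have hbound : ∀ᶠ n : ℕ in atTop, (n : ℝ) ^ 2 * (c / (n : ℝ) ^ s) ≤ c := by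
    filter_upwards [eventually_ge_atTop 1] with n hn
    have hn : (1 : ℝ) ≤ n := by exact_mod_cast hn
    have hsq : (n : ℝ) ^ 2 ≤ (n : ℝ) ^ s := by
      simpa only [rpow_two] using rpow_le_rpow_of_exponent_le hn hs
    rw [mul_div_assoc', div_le_iff₀ (by positivity), mul_comm ((n : ℝ) ^ 2)]
    exact mul_le_mul_of_nonneg_left hsq hc.le
  have hrescale : (fun n : ℕ => (n : ℝ) / (c / (n : ℝ) ^ s)) =ᶠ[atTop]
      fun n : ℕ => c⁻¹ * (n : ℝ) ^ (s + 1) := by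
    filter_upwards [hpos] with n hn
    rw [rpow_add_one hn.ne']
    field_simp
  refine (isTheta_Tsort (hpos.mono fun n hn => by positivity) hbound).trans ?_
  exact hrescale.trans_isTheta ((isTheta_const_mul_left (inv_ne_zero hc.ne')).2 (isTheta_refl _ _))
end

section
/- Define T(n,t) as the exact Sorting formula. For t = 1, T(n,1) satisfies (1/2)·(n! − 1) ≤ T(n,1) ≤ (e − 1)·(n! − 1); in particular T(n,1) = Θ(n!). -/
/-!
At `t = 1` write `P k = ∏_{r=k}^{n-1} (1 + r)`, so that `P k = (1 + k) P (k+1)`. Then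
`P (i+1) + i/(i+1) · P i = P i`, so the bracket `P i + ∑_{k<i} k/(k+1) · P k` does not depend
on `i`; at `i = 1` it is `P 1 = n!`. Hence `T(n,1) = ∑_{i<n} i · i! = n! - 1` by telescoping
`i · i! = (i+1)! - i!`, and both bounds and `T(n,1) ~ n!` follow.
-/

open Filter Asymptotics

open Finset Nat

theorem Finset.prod_Icc_eq_mul_prod_Icc_succ {M : Type*} [CommMonoid M] (f : ℕ → M) {a b : ℕ}
    (h : a ≤ b) : ∏ k ∈ Icc a b, f k = f a * ∏ k ∈ Icc (a + 1) b, f k := by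
  rw [Icc_eq_cons_Ioc h, prod_cons, Icc_add_one_left_eq_Ioc]

theorem prod_Icc_zero_one_add_natCast (m : ℕ) :
    ∏ r ∈ Icc 0 m, (1 + (r : ℝ)) = (m + 1)! := by
  rw [← Ico_add_one_right_eq_Icc, ← range_eq_Ico, ← prod_range_add_one_eq_factorial]
  push_cast
  simp only [add_comm]

theorem sum_Icc_mul_factorial (m : ℕ) : ∑ i ∈ Icc 1 m, (i : ℝ) * i ! = (m + 1)! - 1 := by
  have h : ∀ i : ℕ, (i : ℝ) * i ! = ((i + 1)! : ℝ) - i ! := fun i => by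
    push_cast [factorial_succ]; ring
  simp only [h, ← Ico_add_one_right_eq_Icc]
  rw [sum_Ico_sub (fun i => (i ! : ℝ)) (by omega), factorial_one, cast_one]

theorem tsort_bracket_eq_factorial {m i : ℕ} (hi : 1 ≤ i) (him : i ≤ m + 1) :
    ∏ r ∈ Icc i m, (1 + (r : ℝ)) +
        ∑ k ∈ Icc 1 (i - 1), (k : ℝ) / (k + 1) * ∏ r ∈ Icc k m, (1 + (r : ℝ)) = (m + 1)! := by
  induction i, hi using Nat.le_induction with
  | base =>
    rw [← prod_Icc_zero_one_add_natCast, prod_Icc_eq_mul_prod_Icc_succ _ (Nat.zero_le m)]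
    simp
  | succ i hi ih =>
    obtain ⟨j, rfl⟩ : ∃ j, i = j + 1 := ⟨i - 1, by omega⟩
    rw [← ih (by omega), prod_Icc_eq_mul_prod_Icc_succ _ (by omega : j + 1 ≤ m),
      add_tsub_cancel_right, add_tsub_cancel_right, sum_Icc_succ_top (by omega),
      prod_Icc_eq_mul_prod_Icc_succ _ (by omega : j + 1 ≤ m)]
    field_simp
    push_cast
    ring

theorem tsort_one (n : ℕ) : Tsort n 1 = (n ! : ℝ) - 1 := by
  rcases n with _ | m
  · simp [Tsort]
  simp only [Tsort, mul_one, add_tsub_cancel_right]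
  rw [sum_congr rfl fun i hi =>
    by rw [tsort_bracket_eq_factorial (mem_Icc.1 hi).1 (by linarith [(mem_Icc.1 hi).2])],
    ← sum_mul, sum_Icc_mul_factorial]
  field_simp

theorem factorial_sub_one_isEquivalent :
    (fun n : ℕ => (n ! : ℝ) - 1) ~[atTop] fun n => (n ! : ℝ) :=
  IsEquivalent.refl.sub_isLittleO <| isLittleO_const_left.2 <| Or.inr <| by
    simpa [Function.comp_def] using tendsto_natCast_atTop_atTop.comp factorial_tendsto_atTop

theorem sorting_time_blind_search :
    (∀ n : ℕ, (1 / 2) * ((Nat.factorial n : ℝ) - 1) ≤ Tsort n 1 ∧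
        Tsort n 1 ≤ (Real.exp 1 - 1) * ((Nat.factorial n : ℝ) - 1)) ∧
      (fun n : ℕ => Tsort n 1) =Θ[atTop] fun n : ℕ => (Nat.factorial n : ℝ) := by
  have he : 1 ≤ Real.exp 1 - 1 := by linarith [Real.add_one_le_exp 1]
  refine ⟨fun n => ?_, ?_⟩
  · have hn : 0 ≤ (n ! : ℝ) - 1 := sub_nonneg.2 (by exact_mod_cast n.factorial_pos)
    rw [tsort_one]
    constructor <;> nlinarith
  · simp only [tsort_one]
    exact factorial_sub_one_isEquivalent.isTheta
end
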